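/- arXiv:2205.07120 — 7 statements merged into one kernel-verified Lean document; each statement's English description precedes it below -/
import Mathlib

section
/- For every positive integer n and every integer k with |k| ≤ n, the central-type binomial coefficient satisfies C(2n, n+k) ≤ (2^{2n} / sqrt(π n)) · exp(-k^2/n + 23/(36n)). -/
/-!
Stirling's sequence `n! / (√(2n) (n/e)^n)` decreases to `√π`, which gives
`C(2n, n) ≤ 4^n / √(π n)`. Moving away from the centre, each ratio
`C(2n, n+j+1) / C(2n, n+j) = (1 - t) / (1 + t)` with `t = (2j+1)/(2n+1)` is at most
`exp(-2t - 2t³/3)`, by the first two terms of the series of `log ((1+t)/(1-t))`.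
Summing `2j+1` and `(2j+1)³` over `j < k` turns the product into
`exp(-2k²/(2n+1) - 2k²(2k²-1)/(3(2n+1)³))`, and a polynomial inequality compares this
exponent with `-k²/n + 23/(36n)`.
-/

open Real Stirling
open scoped Nat

namespace Stirling

lemma stirlingSeq_pos_of_ne_zero {n : ℕ} (hn : n ≠ 0) : 0 < stirlingSeq n := by
  obtain ⟨m, rfl⟩ := Nat.exists_eq_succ_of_ne_zero hn
  exact stirlingSeq'_pos m

lemma stirlingSeq_two_mul_le {n : ℕ} (hn : n ≠ 0) : stirlingSeq (2 * n) ≤ stirlingSeq n := by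
  obtain ⟨m, rfl⟩ := Nat.exists_eq_succ_of_ne_zero hn
  exact stirlingSeq'_antitone (show m ≤ 2 * m + 1 by omega)

lemma factorial_eq_stirlingSeq_mul {n : ℕ} (hn : n ≠ 0) :
    (n ! : ℝ) = stirlingSeq n * (√(2 * n) * (n / exp 1) ^ n) := by
  rw [stirlingSeq, div_mul_cancel₀]
  positivity

end Stirling

namespace Nat

lemma centralBinom_eq_stirlingSeq {n : ℕ} (hn : n ≠ 0) :
    (n.centralBinom : ℝ) = stirlingSeq (2 * n) / stirlingSeq n ^ 2 * (4 ^ n / √n) := by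
  have hs := stirlingSeq_pos_of_ne_zero hn
  have hfac : (n.centralBinom : ℝ) * (n ! : ℝ) ^ 2 = (2 * n)! := by
    rw [centralBinom_eq_two_mul_choose]
    exact_mod_cast (by simpa [two_mul, sq, mul_assoc] using
      choose_mul_factorial_mul_factorial (le_add_left n n))
  rw [factorial_eq_stirlingSeq_mul hn, factorial_eq_stirlingSeq_mul (by positivity)] at hfac
  have hn' : (0 : ℝ) < n := by positivity
  have hsqrt : √(2 * ((2 * n : ℕ) : ℝ)) = 2 * √n := by
    rw [cast_mul, cast_two, ← mul_assoc, show (2 : ℝ) * 2 = 2 ^ 2 by norm_num,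
      sqrt_mul (by positivity), sqrt_sq zero_le_two]
  have hpow : (((2 * n : ℕ) : ℝ) / exp 1) ^ (2 * n) = 4 ^ n * ((n / exp 1) ^ n) ^ 2 := by
    rw [show ((2 * n : ℕ) : ℝ) / exp 1 = 2 * (n / exp 1) by push_cast; ring, mul_pow, pow_mul,
      pow_mul']
    norm_num
  rw [hsqrt, hpow, mul_pow, mul_pow, sq_sqrt (by positivity)] at hfac
  have hsq : √(n : ℝ) ^ 2 = n := sq_sqrt hn'.le
  field_simp
  refine mul_right_cancel₀ (b := 2 * √n * ((n / exp 1) ^ n) ^ 2) (by positivity) ?_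
  linear_combination hfac + 2 * n.centralBinom * stirlingSeq n ^ 2 * ((n / exp 1) ^ n) ^ 2 * hsq

lemma centralBinom_le_four_pow_div_sqrt {n : ℕ} (hn : n ≠ 0) :
    (n.centralBinom : ℝ) ≤ 4 ^ n / √(π * n) := by
  have hs := stirlingSeq_pos_of_ne_zero hn
  calc (n.centralBinom : ℝ) = stirlingSeq (2 * n) / stirlingSeq n ^ 2 * (4 ^ n / √n) :=
        centralBinom_eq_stirlingSeq hn
    _ ≤ stirlingSeq n / stirlingSeq n ^ 2 * (4 ^ n / √n) := by
        gcongr; exact stirlingSeq_two_mul_le hn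
    _ = 4 ^ n / (stirlingSeq n * √n) := by field_simp
    _ ≤ 4 ^ n / (√π * √n) := by
        gcongr; exact sqrt_pi_le_stirlingSeq hn
    _ = 4 ^ n / √(π * n) := by rw [sqrt_mul pi_pos.le]

lemma choose_succ_right_eq_mul_div {n k : ℕ} (hk : k < n) :
    (n.choose (k + 1) : ℝ) = n.choose k * ((n - k) / (k + 1)) := by
  rw [mul_div_assoc', eq_div_iff (by positivity), ← cast_sub hk.le]
  exact_mod_cast choose_succ_right_eq n k

lemma choose_two_mul_toNat_add_eq {n : ℕ} {k : ℤ} (hk : |k| ≤ n) :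
    (2 * n).choose ((n : ℤ) + k).toNat = (2 * n).choose (n + k.natAbs) := by
  obtain ⟨m, rfl | rfl⟩ := k.eq_nat_or_neg
  · rfl
  · rw [Int.natAbs_neg, Int.natAbs_natCast]
    have hm : m ≤ n := by rw [abs_neg, Nat.abs_cast] at hk; exact_mod_cast hk
    rw [show ((n : ℤ) + -m).toNat = n - m by omega]
    exact choose_symm_of_eq_add (by omega)

end Nat

lemma two_mul_add_two_mul_pow_three_div_three_le_log_sub_log {t : ℝ} (h0 : 0 ≤ t) (h1 : t < 1) :
    2 * t + 2 * t ^ 3 / 3 ≤ log (1 + t) - log (1 - t) := by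
  have hs := hasSum_log_sub_log_of_abs_lt_one (abs_lt.2 ⟨by linarith, h1⟩)
  have hpartial := sum_le_hasSum (Finset.range 2) (fun i _ => by positivity) hs
  norm_num [Finset.sum_range_succ] at hpartial
  linarith

lemma one_sub_div_one_add_le_exp {t : ℝ} (h0 : 0 ≤ t) (h1 : t < 1) :
    (1 - t) / (1 + t) ≤ exp (-(2 * t + 2 * t ^ 3 / 3)) := by
  rw [exp_neg, ← inv_div]
  refine inv_anti₀ (exp_pos _) ?_
  calc exp (2 * t + 2 * t ^ 3 / 3) ≤ exp (log (1 + t) - log (1 - t)) :=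
        exp_le_exp.2 (two_mul_add_two_mul_pow_three_div_three_le_log_sub_log h0 h1)
    _ = (1 + t) / (1 - t) := by rw [exp_sub, exp_log (by linarith), exp_log (by linarith)]

noncomputable def chooseDecayExponent (x y : ℝ) : ℝ :=
  2 * y ^ 2 / (2 * x + 1) + 2 * y ^ 2 * (2 * y ^ 2 - 1) / (3 * (2 * x + 1) ^ 3)

lemma choose_two_mul_add_le_centralBinom_mul_exp {n k : ℕ} (hk : k ≤ n) :
    ((2 * n).choose (n + k) : ℝ) ≤ n.centralBinom * exp (-chooseDecayExponent n k) := by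
  induction k with
  | zero => simp [chooseDecayExponent, Nat.centralBinom_eq_two_mul_choose]
  | succ k ih =>
    have hkn : (k : ℝ) + 1 ≤ n := by exact_mod_cast hk
    set t : ℝ := (2 * k + 1) / (2 * n + 1) with ht
    have ht0 : 0 ≤ t := by positivity
    have ht1 : t < 1 := by rw [ht, div_lt_one (by positivity)]; linarith
    have hratio : ((2 * n : ℕ) - (n + k : ℕ)) / ((n + k : ℕ) + 1 : ℝ) = (1 - t) / (1 + t) := by
      rw [ht]; push_cast; field_simp; ring
    calc ((2 * n).choose (n + (k + 1)) : ℝ)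
        = (2 * n).choose (n + k) * ((1 - t) / (1 + t)) := by
          rw [← add_assoc, Nat.choose_succ_right_eq_mul_div (by omega), hratio]
      _ ≤ n.centralBinom * exp (-chooseDecayExponent n k) * exp (-(2 * t + 2 * t ^ 3 / 3)) :=
          mul_le_mul (ih (by omega)) (one_sub_div_one_add_le_exp ht0 ht1)
            (div_nonneg (by linarith) (by linarith)) (by positivity)
      _ = n.centralBinom * exp (-chooseDecayExponent n (k + 1 : ℕ)) := by
        rw [mul_assoc, ← exp_add, ht, chooseDecayExponent, chooseDecayExponent]
        congr 2
        push_cast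
        field_simp
        ring

lemma sq_div_sub_le_chooseDecayExponent {x y : ℝ} (hx : 1 ≤ x) (hy : 0 ≤ y) (hyx : y ≤ x) :
    y ^ 2 / x - 23 / (36 * x) ≤ chooseDecayExponent x y := by
  have hpoly : 36 * y ^ 2 * (2 * x + 1) ^ 2 + 24 * x * y ^ 2 ≤
      48 * x * y ^ 4 + 23 * (2 * x + 1) ^ 3 := by
    nlinarith [sq_nonneg (96 * x * y ^ 2 - (144 * x ^ 2 + 168 * x + 36)),
      mul_nonneg (sub_nonneg.2 hx) hy, mul_nonneg (sub_nonneg.2 hyx) hy,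
      mul_nonneg (sub_nonneg.2 hx) (sub_nonneg.2 hyx), sq_nonneg (y ^ 2 - 4)]
  have hx0 : 0 < x := by linarith
  have hdiff : chooseDecayExponent x y - (y ^ 2 / x - 23 / (36 * x)) =
      (48 * x * y ^ 4 + 23 * (2 * x + 1) ^ 3 - (36 * y ^ 2 * (2 * x + 1) ^ 2 + 24 * x * y ^ 2)) /
        (36 * x * (2 * x + 1) ^ 3) := by
    rw [chooseDecayExponent]
    field_simp
    ring
  rw [← sub_nonneg, hdiff]
  exact div_nonneg (sub_nonneg.2 hpoly) (by positivity)

theorem central_binom_bound (n : ℕ) (hn : 0 < n) (k : ℤ) (hk : |k| ≤ (n : ℤ)) :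
    (((2 * n).choose ((n : ℤ) + k).toNat : ℕ) : ℝ) ≤
      2 ^ (2 * n) / Real.sqrt (π * n) *
        Real.exp (-((k : ℝ) ^ 2) / n + 23 / (36 * n)) := by
  have hkn : k.natAbs ≤ n := by rw [Int.abs_eq_natAbs] at hk; omega
  have hk2 : (k : ℝ) ^ 2 = (k.natAbs : ℝ) ^ 2 := by rw [Nat.cast_natAbs, Int.cast_abs, sq_abs]
  have hexp : -chooseDecayExponent n k.natAbs ≤ -((k.natAbs : ℝ) ^ 2) / n + 23 / (36 * n) := by
    have := sq_div_sub_le_chooseDecayExponent (x := n) (y := k.natAbs) (by exact_mod_cast hn)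
      (by positivity) (by exact_mod_cast hkn)
    rw [neg_div]
    linarith
  rw [Nat.choose_two_mul_toNat_add_eq hk, hk2, pow_mul, show (2 : ℝ) ^ 2 = 4 by norm_num]
  calc ((2 * n).choose (n + k.natAbs) : ℝ)
      ≤ n.centralBinom * exp (-chooseDecayExponent n k.natAbs) :=
        choose_two_mul_add_le_centralBinom_mul_exp hkn
    _ ≤ 4 ^ n / √(π * n) * exp (-((k.natAbs : ℝ) ^ 2) / n + 23 / (36 * n)) := by
        gcongr
        exact Nat.centralBinom_le_four_pow_div_sqrt hn.ne'
end

section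
/- For every integer n ≥ 3 and every integer k with 0 ≤ k < n, one has log(C(2n,n+k) · 2^{-2n}) ≤ log(1/sqrt(π n)) - b_{k,n} - 1/(9n), where b_{k,n} = n·((1 + (k+1/2)/n)·log(1 + k/n) + (1 - (k-1/2)/n)·log(1 - k/n)). -/
/-!
Write `log n! = n log n - n + log (2πn) / 2 + r n`. The logarithm of `C(2n, n+k) / 4^n` is then
exactly `log (1 / √(πn)) - b_{k,n} + r (2n) - r (n+k) - r (n-k)`. Robbins' bounds
`1 / (12m + 1) ≤ r m ≤ 1 / (12m)` follow by telescoping stepwise bounds on the Stirling sequence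
towards its limit `√π`; with the convexity of `x ↦ 1 / (12x + 1)` they bound the remainder
combination by `1 / (24n) - 2 / (12n + 1) ≤ -1 / (9n)`.
-/

open Real Filter Topology
open scoped Nat

lemma le_of_tendsto_zero_of_sub_succ_le {u v : ℕ → ℝ} (hu : Tendsto u atTop (𝓝 0))
    (hv : Tendsto v atTop (𝓝 0)) (h : ∀ n, u n - u (n + 1) ≤ v n - v (n + 1)) (n : ℕ) :
    u n ≤ v n := by
  have hmono : Monotone (u - v) := monotone_nat_of_le_succ fun m => by
    simp only [Pi.sub_apply]; linarith [h m]
  have := hmono.ge_of_tendsto (sub_self (0 : ℝ) ▸ hu.sub hv) n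
  simpa [sub_nonpos] using this

namespace Stirling

noncomputable def remainder (n : ℕ) : ℝ := log (stirlingSeq n) - log √π

theorem log_factorial_eq {n : ℕ} (hn : n ≠ 0) :
    log (n ! : ℝ) = n * log n - n + log (2 * π * n) / 2 + remainder n := by
  rw [remainder, log_stirlingSeq_formula, log_div (by positivity) (exp_ne_zero 1), log_exp,
    log_sqrt pi_pos.le, log_mul (by positivity) (by positivity),
    log_mul (by positivity) (by positivity), log_mul (by positivity) (by positivity)]
  ring

theorem tendsto_remainder : Tendsto remainder atTop (𝓝 0) := by
  show Tendsto (fun n => log (stirlingSeq n) - log √π) atTop (𝓝 0)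
  simpa using (tendsto_stirlingSeq_sqrt_pi.log (by positivity)).sub_const (log √π)

theorem remainder_sub_remainder_succ_le {n : ℕ} (hn : n ≠ 0) :
    remainder n - remainder (n + 1) ≤ 1 / (12 * n) - 1 / (12 * (n + 1 : ℕ)) := by
  calc remainder n - remainder (n + 1) = log (stirlingSeq n) - log (stirlingSeq (n + 1)) := by
        simp only [remainder]; ring
    _ ≤ 1 / (12 * n * (n + 1)) := log_stirlingSeq_sdiff_le n
    _ = _ := by push_cast; field_simp; ring

theorem sub_le_remainder_sub_remainder_succ (n : ℕ) :
    1 / (12 * (n + 1 : ℕ) + 1) - 1 / (12 * (n + 2 : ℕ) + 1) ≤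
      remainder (n + 1) - remainder (n + 2) := by
  -- keep only the first term `r / 3` of the series, where `r = (2n + 3)⁻²`
  have hfirst : 1 / 3 * (1 / (2 * (n + 1 : ℝ) + 1)) ^ 2 ≤
      log (stirlingSeq (n + 1)) - log (stirlingSeq (n + 2)) := by
    refine (le_hasSum (log_stirlingSeq_sdiff_hasSum n) 0 fun j _ => by positivity).trans' ?_
    norm_num
  calc 1 / (12 * (n + 1 : ℕ) + 1) - 1 / (12 * (n + 2 : ℕ) + 1)
      ≤ 1 / 3 * (1 / (2 * (n + 1 : ℝ) + 1)) ^ 2 := by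
        push_cast
        rw [div_sub_div _ _ (by positivity) (by positivity), div_le_iff₀ (by positivity)]
        field_simp
        nlinarith
    _ ≤ log (stirlingSeq (n + 1)) - log (stirlingSeq (n + 2)) := hfirst
    _ = _ := by simp only [remainder]; ring

lemma tendsto_twelve_mul_succ_atTop :
    Tendsto (fun m : ℕ => 12 * ((m + 1 : ℕ) : ℝ)) atTop atTop :=
  (tendsto_natCast_atTop_atTop.comp (tendsto_add_atTop_nat 1)).const_mul_atTop (by norm_num)

theorem remainder_le {n : ℕ} (hn : n ≠ 0) : remainder n ≤ 1 / (12 * n) := by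
  obtain ⟨m, rfl⟩ := Nat.exists_eq_succ_of_ne_zero hn
  refine le_of_tendsto_zero_of_sub_succ_le (u := fun m => remainder (m + 1))
    (v := fun m => 1 / (12 * (m + 1 : ℕ))) (tendsto_remainder.comp (tendsto_add_atTop_nat 1))
    (tendsto_const_nhds.div_atTop tendsto_twelve_mul_succ_atTop)
    (fun m => remainder_sub_remainder_succ_le m.succ_ne_zero) m

theorem le_remainder {n : ℕ} (hn : n ≠ 0) : 1 / (12 * n + 1) ≤ remainder n := by
  obtain ⟨m, rfl⟩ := Nat.exists_eq_succ_of_ne_zero hn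
  refine le_of_tendsto_zero_of_sub_succ_le (v := fun m => remainder (m + 1))
    (u := fun m => 1 / (12 * (m + 1 : ℕ) + 1))
    (tendsto_const_nhds.div_atTop
      (tendsto_atTop_add_const_right _ 1 tendsto_twelve_mul_succ_atTop))
    (tendsto_remainder.comp (tendsto_add_atTop_nat 1)) sub_le_remainder_sub_remainder_succ m

theorem log_choose_mul_two_zpow_eq {n k : ℕ} (hk : k < n) :
    log (((2 * n).choose (n + k) : ℝ) * 2 ^ (-(2 * n : ℤ))) =
      log (1 / √(π * n)) -
        n * ((1 + ((k : ℝ) + 1 / 2) / n) * log (1 + (k : ℝ) / n) +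
          (1 - ((k : ℝ) - 1 / 2) / n) * log (1 - (k : ℝ) / n)) +
        (remainder (2 * n) - remainder (n + k) - remainder (n - k)) := by
  have hn : (0 : ℝ) < n := by exact_mod_cast (k.zero_le.trans_lt hk)
  have hnk : (0 : ℝ) < n - k := sub_pos.mpr (by exact_mod_cast hk)
  have h1 : 1 + (k : ℝ) / n = (n + k) / n := by field_simp
  have h2 : 1 - (k : ℝ) / n = (n - k) / n := by field_simp
  rw [Nat.cast_choose ℝ (by omega : n + k ≤ 2 * n), show 2 * n - (n + k) = n - k by omega,
    log_mul (by positivity) (by positivity), log_div (by positivity) (by positivity),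
    log_mul (by positivity) (by positivity), log_zpow,
    log_factorial_eq (by omega), log_factorial_eq (by omega), log_factorial_eq (by omega),
    h1, h2, log_div (by positivity) hn.ne', log_div hnk.ne' hn.ne', one_div, log_inv,
    log_sqrt (by positivity)]
  push_cast [Nat.cast_sub hk.le]
  simp (disch := positivity) only [log_mul]
  field_simp
  ring

theorem remainder_two_mul_sub_remainder_add_sub_le {n k : ℕ} (hk : k < n) :
    remainder (2 * n) - remainder (n + k) - remainder (n - k) ≤ -(1 / (9 * n)) := by
  have hn : (1 : ℝ) ≤ n := by exact_mod_cast (k.zero_le.trans_lt hk)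
  have hnk : (0 : ℝ) < n - k := sub_pos.mpr (by exact_mod_cast hk)
  have h2n := remainder_le (n := 2 * n) (by omega)
  have hadd := le_remainder (n := n + k) (by omega)
  have hsub := le_remainder (n := n - k) (by omega)
  push_cast [Nat.cast_sub hk.le] at h2n hadd hsub
  have hconvex : 2 / (12 * (n : ℝ) + 1) ≤ 1 / (12 * (n + k) + 1) + 1 / (12 * (n - k) + 1) := by
    rw [div_add_div _ _ (by positivity) (by positivity),
      div_le_div_iff₀ (by positivity) (by positivity)]
    nlinarith [sq_nonneg (k : ℝ)]
  have hgap : 1 / (12 * (2 * n : ℝ)) + 1 / (9 * n) ≤ 2 / (12 * n + 1) := by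
    rw [div_add_div _ _ (by positivity) (by positivity),
      div_le_div_iff₀ (by positivity) (by positivity)]
    nlinarith
  linarith

end Stirling

theorem log_central_binom_bound_general (n k : ℕ) (hk : k < n) :
    Real.log (((2 * n).choose (n + k) : ℝ) * 2 ^ (-(2 * n : ℤ))) ≤
      Real.log (1 / Real.sqrt (π * n)) -
        (n : ℝ) * ((1 + ((k : ℝ) + 1 / 2) / n) * Real.log (1 + (k : ℝ) / n) +
          (1 - ((k : ℝ) - 1 / 2) / n) * Real.log (1 - (k : ℝ) / n)) -
        1 / (9 * n) := by
  rw [Stirling.log_choose_mul_two_zpow_eq hk]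
  linarith [Stirling.remainder_two_mul_sub_remainder_add_sub_le hk]

theorem log_central_binom_bound (n k : ℕ) (hn : 3 ≤ n) (hk : k < n) :
    Real.log (((2 * n).choose (n + k) : ℝ) * 2 ^ (-(2 * n : ℤ))) ≤
      Real.log (1 / Real.sqrt (π * n)) -
        (n : ℝ) * ((1 + ((k : ℝ) + 1 / 2) / n) * Real.log (1 + (k : ℝ) / n) +
          (1 - ((k : ℝ) - 1 / 2) / n) * Real.log (1 - (k : ℝ) / n)) -
        1 / (9 * n) :=
  log_central_binom_bound_general n k hk
end

section
/- For every integer n ≥ 3 and every integer k with 0 ≤ k < n, the quantity b_{k,n} defined by b_{k,n} = n·((1 + (k+1/2)/n)·log(1 + k/n) + (1 - (k-1/2)/n)·log(1 - k/n)) satisfies b_{k,n} > k^2/n - 3/(4n). -/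
/-!
Put `u = k / n` and `t = 1 / (2 n)`, so that `k ≤ n - 1` reads `t ≤ (1 - u) / 2`. Then
`b_{k,n} - k² / n + 3 / (4 n) = n (G(u) + t log (1 - u²) + 3 t²)`, where
`G(u) = (1 + u) log (1 + u) + (1 - u) log (1 - u) - u² = ∑_{m ≥ 2} u^{2m} / (m (2m - 1))`.
This is a convex quadratic in `t`. For `u ≤ 4/5` its discriminant `log (1 - u²)² - 12 G(u)` is
negative. For `u ≥ 4/5` its vertex `-log (1 - u²) / 6` lies beyond `(1 - u) / 2`, so it suffices
to check the endpoint `t = (1 - u) / 2`. Both one-variable inequalities follow from truncating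
the power series of `G` and of `log (1 - u²)`, together with the tangent line of `x log x` at
`1/4` for the singular term `(1 - u) log (1 - u)`.
-/

open Real Finset

theorem log_one_add_add_log_one_sub {u : ℝ} (hu : |u| < 1) :
    log (1 + u) + log (1 - u) = log (1 - u ^ 2) := by
  rw [← log_mul (by linarith [neg_abs_le u]) (by linarith [le_abs_self u])]
  ring_nf

theorem hasSum_one_add_mul_log_one_add_add_one_sub_mul_log_one_sub {u : ℝ} (hu : |u| < 1) :
    HasSum (fun n : ℕ => (u ^ 2) ^ (n + 1) / ((n + 1) * (2 * n + 1)))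
      ((1 + u) * log (1 + u) + (1 - u) * log (1 - u)) := by
  have hu2 : |u ^ 2| < 1 := by rw [abs_pow]; exact pow_lt_one₀ (abs_nonneg u) hu two_ne_zero
  have h := ((hasSum_log_sub_log_of_abs_lt_one hu).mul_left u).sub
    (hasSum_pow_div_log_of_abs_lt_one hu2)
  rw [show (1 + u) * log (1 + u) + (1 - u) * log (1 - u)
      = u * (log (1 + u) - log (1 - u)) - -log (1 - u ^ 2) by
    rw [← log_one_add_add_log_one_sub hu]; ring]
  exact h.congr_fun fun n => by field_simp; ring

theorem neg_log_one_sub_le_sum_range_add {s : ℝ} (hs0 : 0 ≤ s) (hs1 : s < 1) (N : ℕ) :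
    -log (1 - s) ≤ ∑ i ∈ range N, s ^ (i + 1) / (i + 1) + s ^ (N + 1) / ((N + 1) * (1 - s)) := by
  have htail := (hasSum_nat_add_iff' N).2
    (hasSum_pow_div_log_of_abs_lt_one (by rwa [abs_of_nonneg hs0]))
  have hgeom := (hasSum_geometric_of_lt_one hs0 hs1).mul_left (s ^ (N + 1) / (N + 1))
  have := hasSum_le (fun i => ?_) htail hgeom
  · rw [← div_eq_mul_inv, div_div] at this
    linarith
  · calc s ^ (i + N + 1) / (↑(i + N) + 1) ≤ s ^ (i + N + 1) / (N + 1) := by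
          gcongr
          omega
      _ = s ^ (N + 1) / (N + 1) * s ^ i := by ring

/-- The tangent line of the convex function `x ↦ x log x` at `1 / c`. -/
theorem tangent_le_mul_log {x c : ℝ} (hx : 0 ≤ x) (hc : 0 < c) :
    x - x * log c - c⁻¹ ≤ x * log x := by
  rcases hx.eq_or_lt with rfl | hx
  · simpa using hc.le
  have := log_le_sub_one_of_pos (inv_pos.2 (mul_pos hc hx))
  rw [log_inv, log_mul hc.ne' hx.ne', mul_inv] at this
  have h := mul_le_mul_of_nonneg_left this hx.le
  field_simp at h ⊢
  nlinarith [h]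

theorem log_one_sub_sq_sq_lt {u : ℝ} (hu0 : 0 < u) (hu : u ≤ 4 / 5) :
    log (1 - u ^ 2) ^ 2 < 12 * ((1 + u) * log (1 + u) + (1 - u) * log (1 - u) - u ^ 2) := by
  have hG := sum_le_hasSum (range 5) (fun n _ => by positivity)
    (hasSum_one_add_mul_log_one_add_add_one_sub_mul_log_one_sub
      (abs_lt.2 ⟨by linarith, by linarith⟩))
  set s := u ^ 2
  have hs0 : 0 < s := by positivity
  have hs1 : s ≤ 16 / 25 := by nlinarith
  have hL := neg_log_one_sub_le_sum_range_add hs0.le (by linarith) 3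
  simp only [sum_range_succ, sum_range_zero] at hG hL
  norm_num at hG hL
  have hL0 : 0 ≤ -log (1 - s) := neg_nonneg.2 (log_nonpos (by linarith) (by linarith))
  have hpoly : (s + s ^ 2 / 2 + s ^ 3 / 3 + s ^ 4 / (4 * (1 - s))) ^ 2
      < 12 * (s ^ 2 / 6 + s ^ 3 / 15 + s ^ 4 / 28 + s ^ 5 / 45) := by
    have h1s : 0 < 1 - s := by linarith
    rw [show s + s ^ 2 / 2 + s ^ 3 / 3 + s ^ 4 / (4 * (1 - s))
        = (s - s ^ 2 / 2 - s ^ 3 / 6 - s ^ 4 / 12) / (1 - s) by field_simp; ring,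
      div_pow, div_lt_iff₀ (by positivity)]
    have hw : 0 ≤ 16 / 25 - s := by linarith
    -- the two sides differ by `s²` times this polynomial
    have hE : 0 < 1 - 11 / 5 * s + 383 / 420 * s ^ 2 + 22 / 105 * s ^ 3 - 68 / 315 * s ^ 4
        + 43 / 180 * s ^ 5 - 1 / 144 * s ^ 6 := by
      nlinarith [mul_nonneg hs0.le hw, pow_nonneg hs0.le 3, mul_nonneg (pow_nonneg hs0.le 2) hw,
        mul_nonneg (pow_nonneg hs0.le 3) hw, mul_nonneg (pow_nonneg hs0.le 4) hw,
        mul_nonneg (pow_nonneg hs0.le 5) hw]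
    nlinarith [mul_pos (pow_pos hs0 2) hE]
  nlinarith

theorem three_mul_one_sub_add_log_one_sub_sq_nonpos {u : ℝ} (hu : 4 / 5 ≤ u) (hu1 : u < 1) :
    3 * (1 - u) + log (1 - u ^ 2) ≤ 0 := by
  nlinarith [log_le_sub_one_of_pos (show 0 < 1 - u ^ 2 by nlinarith)]

theorem endpoint_pos_of_four_fifths_le {u : ℝ} (hu : 4 / 5 ≤ u) (hu1 : u < 1) :
    0 < (1 + u) * log (1 + u) + (1 - u) * log (1 - u) - u ^ 2
      + (1 - u) / 2 * log (1 - u ^ 2) + 3 * ((1 - u) / 2) ^ 2 := by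
  have hu' : |u| < 1 := abs_lt.2 ⟨by linarith, hu1⟩
  have hG := sum_le_hasSum (range 3) (fun n _ => by positivity)
    (hasSum_one_add_mul_log_one_add_add_one_sub_mul_log_one_sub hu')
  simp only [sum_range_succ, sum_range_zero] at hG
  norm_num at hG
  have h1u : 0 ≤ 1 - u := by linarith
  have hlog1 := le_log_one_add_of_nonneg (show 0 ≤ u by linarith)
  have hlog2 := tangent_le_mul_log h1u four_pos
  have hlog4 : log 4 < 7 / 5 := by
    rw [show (4 : ℝ) = 2 ^ 2 by norm_num, log_pow]
    linarith [log_two_lt_d9]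
  have h2u : 4 / 7 ≤ 2 * u / (u + 2) := by rw [le_div_iff₀ (by linarith)]; linarith
  have hpoly : 0 < (u ^ 2) ^ 2 / 6 + (u ^ 2) ^ 3 / 15 + 2 * (1 - u) / 7 - (1 - u) / 5 - 1 / 8
      + 3 * ((1 - u) / 2) ^ 2 := by
    -- as a polynomial in `v = u - 4/5` all coefficients are positive
    obtain ⟨v, hv, rfl⟩ : ∃ v, 0 ≤ v ∧ u = 4 / 5 + v := ⟨u - 4 / 5, by linarith, by ring⟩
    ring_nf
    positivity
  rw [← log_one_add_add_log_one_sub hu']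
  nlinarith [mul_le_mul_of_nonneg_left (h2u.trans hlog1) h1u,
    mul_le_mul_of_nonneg_left hlog4.le h1u]

theorem sq_sub_three_mul_sq_lt {u t : ℝ} (hu : 0 ≤ u) (ht : 0 < t) (hut : u + 2 * t ≤ 1) :
    u ^ 2 - 3 * t ^ 2 < (1 + u + t) * log (1 + u) + (1 - u + t) * log (1 - u) := by
  have hu1 : |u| < 1 := abs_lt.2 ⟨by linarith, by linarith⟩
  suffices 0 < (1 + u) * log (1 + u) + (1 - u) * log (1 - u) - u ^ 2
      + t * log (1 - u ^ 2) + 3 * t ^ 2 by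
    rw [← log_one_add_add_log_one_sub hu1] at this
    linarith
  rcases hu.eq_or_lt with rfl | hu0
  · norm_num
    positivity
  rcases le_or_gt u (4 / 5) with hA | hB
  · nlinarith [log_one_sub_sq_sq_lt hu0 hA, sq_nonneg (6 * t + log (1 - u ^ 2))]
  · have hT := endpoint_pos_of_four_fifths_le hB.le (by linarith)
    have hL := three_mul_one_sub_add_log_one_sub_sq_nonpos hB.le (by linarith)
    -- the quadratic at `t` minus its value at `(1 - u) / 2` is a product of two nonpositive factors
    nlinarith [mul_nonneg_of_nonpos_of_nonpos (show t - (1 - u) / 2 ≤ 0 by linarith)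
      (show log (1 - u ^ 2) + 3 * (t + (1 - u) / 2) ≤ 0 by linarith)]

theorem b_kn_lower_bound_general (n k : ℕ) (hk : k < n) :
    (n : ℝ) * ((1 + ((k : ℝ) + 1 / 2) / n) * Real.log (1 + (k : ℝ) / n) +
        (1 - ((k : ℝ) - 1 / 2) / n) * Real.log (1 - (k : ℝ) / n)) >
      (k : ℝ) ^ 2 / n - 3 / (4 * n) := by
  have hn : (0 : ℝ) < n := by exact_mod_cast (Nat.zero_le k).trans_lt hk
  have hkn : (k : ℝ) + 1 ≤ n := by exact_mod_cast hk
  have key := sq_sub_three_mul_sq_lt (u := k / n) (t := 1 / (2 * n)) (by positivity)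
    (by positivity) (by field_simp; linarith)
  rw [gt_iff_lt, show 1 + ((k : ℝ) + 1 / 2) / n = 1 + k / n + 1 / (2 * n) by field_simp; ring,
    show 1 - ((k : ℝ) - 1 / 2) / n = 1 - k / n + 1 / (2 * n) by field_simp; ring]
  calc (k : ℝ) ^ 2 / n - 3 / (4 * n) = n * ((k / n) ^ 2 - 3 * (1 / (2 * n)) ^ 2) := by
        field_simp; ring
    _ < _ := mul_lt_mul_of_pos_left key hn

theorem b_kn_lower_bound (n k : ℕ) (hn : 3 ≤ n) (hk : k < n) :
    (n : ℝ) * ((1 + ((k : ℝ) + 1 / 2) / n) * Real.log (1 + (k : ℝ) / n) +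
        (1 - ((k : ℝ) - 1 / 2) / n) * Real.log (1 - (k : ℝ) / n)) >
      (k : ℝ) ^ 2 / n - 3 / (4 * n) :=
  b_kn_lower_bound_general n k hk
end

section
/- Let m be a positive integer and define t(k) = log(2 - k/m) - (2m^2 - m - 2k^2)/(2m(2m-1)) for real k with 0 ≤ k ≤ m. Then t(k) ≥ 0 for all k in [0, m]. -/
/-!
With `u = 1 - k/m ≥ 0`, the bound `log (1 + u) ≥ u - u^2/2 = (1 - (k/m)^2)/2` holds, and the
rational term of `t` falls short of `(1 - (k/m)^2)/2` by `k^2 / (2m^2(2m - 1)) ≥ 0`.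
-/

open Real

/-- Via `log (1 + u) ≥ 2u/(u+2)`, which exceeds `u - u^2/2` by `u^3 / (2(u+2))`. -/
lemma sub_sq_div_two_le_log_one_add {u : ℝ} (hu : 0 ≤ u) : u - u ^ 2 / 2 ≤ log (1 + u) := by
  refine le_trans ?_ (le_log_one_add_of_nonneg hu)
  rw [le_div_iff₀ (by linarith)]
  nlinarith [pow_nonneg hu 3]

lemma div_le_one_sub_div_sq_div_two {m : ℝ} (hm : 1 ≤ m) (k : ℝ) :
    (2 * m ^ 2 - m - 2 * k ^ 2) / (2 * m * (2 * m - 1)) ≤ (1 - (k / m) ^ 2) / 2 := by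
  rw [div_pow, one_sub_div (by positivity), div_div,
    div_le_div_iff₀ (by nlinarith) (by positivity)]
  nlinarith [mul_nonneg (by linarith : (0 : ℝ) ≤ m) (sq_nonneg k)]

theorem t_nonneg_general (m : ℕ) (hm : 0 < m) (k : ℝ) (hkm : k ≤ m) :
    Real.log (2 - k / m) -
      (2 * (m : ℝ) ^ 2 - m - 2 * k ^ 2) / (2 * m * (2 * m - 1)) ≥ 0 := by
  have hm1 : (1 : ℝ) ≤ m := by exact_mod_cast hm
  have hu : 0 ≤ 1 - k / m := by
    rw [sub_nonneg, div_le_one (by linarith)]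
    exact hkm
  have hlog := sub_sq_div_two_le_log_one_add hu
  rw [show 1 + (1 - k / m) = 2 - k / m by ring] at hlog
  have hquad := div_le_one_sub_div_sq_div_two hm1 k
  linarith [show 1 - k / m - (1 - k / m) ^ 2 / 2 = (1 - (k / m) ^ 2) / 2 by ring]

theorem t_nonneg (m : ℕ) (hm : 0 < m) (k : ℝ) (hk0 : 0 ≤ k) (hkm : k ≤ m) :
    Real.log (2 - k / m) -
      (2 * (m : ℝ) ^ 2 - m - 2 * k ^ 2) / (2 * m * (2 * m - 1)) ≥ 0 :=
  t_nonneg_general m hm k hkm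
end

section
/- For every real x > 0, log(1 + 1/x) - 1/(1+x) ≥ (x-1)/(2x^2(x+1)); in particular log(1 + 1/x) - 1/(1+x) > 0 for x ≥ 1. -/
/-! The Padé-type bound `2t/(t + 2) < log (1 + t)` at `t = 1/x` gives
`log (1 + 1/x) - 1/(1 + x) > 2/(1 + 2x) - 1/(1 + x) = 1/((1 + x)(1 + 2x))`,
which is positive and dominates `(x - 1)/(2x²(x + 1))` since `(x - 1)(1 + 2x) < 2x²`. -/

open Real

lemma lt_log_one_add_one_div_sub_one_div {x : ℝ} (hx : 0 < x) :
    1 / ((1 + x) * (1 + 2 * x)) < log (1 + 1 / x) - 1 / (1 + x) := by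
  have hpade := lt_log_one_add_of_pos (one_div_pos.2 hx)
  have hsimp : 2 * (1 / x) / (1 / x + 2) = 2 / (1 + 2 * x) := by
    field_simp
  have hsplit : 2 / (1 + 2 * x) - 1 / (1 + x) = 1 / ((1 + x) * (1 + 2 * x)) := by
    field_simp
    ring
  linarith

theorem log_one_add_inv_bound (x : ℝ) (hx : 0 < x) :
    Real.log (1 + 1 / x) - 1 / (1 + x) ≥ (x - 1) / (2 * x ^ 2 * (x + 1)) ∧
    (1 ≤ x → Real.log (1 + 1 / x) - 1 / (1 + x) > 0) := by
  have hlower := lt_log_one_add_one_div_sub_one_div hx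
  refine ⟨?_, fun _ => lt_trans (by positivity) hlower⟩
  have hcompare : (x - 1) / (2 * x ^ 2 * (x + 1)) ≤ 1 / ((1 + x) * (1 + 2 * x)) := by
    rw [div_le_div_iff₀ (by positivity) (by positivity)]
    nlinarith [sq_nonneg x]
  linarith
end

section
/- Let Ω ⊂ Z^N (N = 2^n) be the set of tuples (ĥf(u))_{u ∈ F_2^n} of Walsh–Hadamard spectra of all Boolean functions f : F_2^n → F_2, and let p be the uniform distribution on Ω. Then the Latin dependence degree L(p) = Σ_{(b_1,...,b_N) ∈ Ω} Π_{i=1}^N p_i(b_i), where p_i is the i-th marginal of p, satisfies L(p) ≤ exp(23/18)·(8/(π e N))^{N/2}. -/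
open Real

/-- The Walsh–Hadamard spectrum of a Boolean function. -/
def walsh {n : ℕ} (f : (Fin n → ZMod 2) → ZMod 2) (u : Fin n → ZMod 2) : ℤ :=
  ∑ x : Fin n → ZMod 2, (-1 : ℤ) ^ ((f x + ∑ i, x i * u i).val)

/-- The set of Walsh–Hadamard spectra of all Boolean functions in `n` variables,
viewed as integer-valued tuples indexed by `F_2^n`. -/
noncomputable def spectra (n : ℕ) : Finset ((Fin n → ZMod 2) → ℤ) :=
  Finset.univ.image (fun f : (Fin n → ZMod 2) → ZMod 2 => walsh f)

/-- The marginal of the uniform distribution on `spectra n` at coordinate `u`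
and value `x`. -/
noncomputable def marginal (n : ℕ) (u : Fin n → ZMod 2) (x : ℤ) : ℝ :=
  ((spectra n).filter (fun b => b u = x)).card / (spectra n).card

/-- The Latin dependence degree of the uniform distribution on `spectra n`. -/
noncomputable def latinDegree (n : ℕ) : ℝ :=
  ∑ b ∈ spectra n, ∏ u : Fin n → ZMod 2, marginal n u (b u)


open Real Finset Nat

/-!
By injectivity of the Walsh transform, `L = ∑_f ∏_u p_u(ĥf(u))`. Writing `N = 2^n = 2M`, one has
`ĥf(u) = N - 2 w_u` with `w_u` the Hamming weight of `f + ⟨·, u⟩`, and since `f ↦ f + ⟨·, u⟩` is a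
bijection, `p_u(ĥf(u)) = C(N, w_u) / 2^N`. A local limit bound for the binomial distribution,
`C(2M, w) / 4^M ≤ exp(23/(36M) - (M - w)^2/M) / √(πM)`, turns the product over `u` into a Gaussian
whose exponent is fixed by Parseval, `∑_u (M - w_u)^2 = M^2`. Hence every term is at most
`e^{23/18} (πeM)^{-M}`, and summing over the `4^M` Boolean functions gives the bound. The case
`n = 0`, where `N` is odd, is a numerical check.
-/

def chi : AddChar (ZMod 2) ℤ where
  toFun a := (-1) ^ a.val
  map_zero_eq_one' := rfl
  map_add_eq_mul' := by decide

lemma chi_mul_self (a : ZMod 2) : chi a * chi a = 1 := by revert a; decide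

lemma chi_injective : Function.Injective chi := by decide

lemma chi_sum {ι : Type*} (s : Finset ι) (f : ι → ZMod 2) :
    chi (∑ i ∈ s, f i) = ∏ i ∈ s, chi (f i) := by
  induction s using Finset.cons_induction with
  | empty => simp
  | cons a s _ ih => rw [sum_cons, prod_cons, AddChar.map_add_eq_mul, ih]

lemma sum_chi_mul (c : ZMod 2) : ∑ v, chi (c * v) = if c = 0 then 2 else 0 := by
  revert c; decide

lemma sum_chi_dotProduct {n : ℕ} (c : Fin n → ZMod 2) :
    ∑ u : Fin n → ZMod 2, chi (c ⬝ᵥ u) = if c = 0 then 2 ^ n else 0 := by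
  simp only [dotProduct, chi_sum]
  rw [← Fintype.prod_sum (fun i v => chi (c i * v))]
  simp only [sum_chi_mul]
  split_ifs with hc
  · simp [hc]
  · obtain ⟨i, hi⟩ := Function.ne_iff.mp hc
    exact prod_eq_zero (mem_univ i) (if_neg hi)

lemma sum_chi_add_dotProduct {n : ℕ} (x y : Fin n → ZMod 2) :
    ∑ u : Fin n → ZMod 2, chi ((x + y) ⬝ᵥ u) = if x = y then 2 ^ n else 0 := by
  have : x + y = 0 ↔ x = y := by
    simp only [funext_iff, Pi.add_apply, Pi.zero_apply, CharTwo.add_eq_zero]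
  simp only [sum_chi_dotProduct, this]

lemma walsh_eq_sum_chi {n : ℕ} (f : (Fin n → ZMod 2) → ZMod 2) (u : Fin n → ZMod 2) :
    walsh f u = ∑ x, chi (f x + x ⬝ᵥ u) := rfl

lemma sum_walsh_mul_chi {n : ℕ} (f : (Fin n → ZMod 2) → ZMod 2) (x : Fin n → ZMod 2) :
    ∑ u, walsh f u * chi (x ⬝ᵥ u) = 2 ^ n * chi (f x) := by
  have (u y : Fin n → ZMod 2) :
      chi (f y + y ⬝ᵥ u) * chi (x ⬝ᵥ u) = chi (f y) * chi ((y + x) ⬝ᵥ u) := by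
    simp only [add_dotProduct, AddChar.map_add_eq_mul]; ring
  simp_rw [walsh_eq_sum_chi, sum_mul, this]
  rw [sum_comm]
  simp_rw [← mul_sum, sum_chi_add_dotProduct, mul_ite, mul_zero, sum_ite_eq', if_pos (mem_univ _)]
  ring

lemma walsh_injective (n : ℕ) : Function.Injective (walsh (n := n)) := by
  intro f g h
  funext x
  have := sum_walsh_mul_chi f x
  rw [h, sum_walsh_mul_chi] at this
  exact chi_injective (mul_left_cancel₀ (by positivity) this).symm

lemma sum_walsh_sq {n : ℕ} (f : (Fin n → ZMod 2) → ZMod 2) :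
    ∑ u, walsh f u ^ 2 = (2 ^ n) ^ 2 := by
  have (u x y : Fin n → ZMod 2) :
      chi (f x + x ⬝ᵥ u) * chi (f y + y ⬝ᵥ u) = chi (f x) * chi (f y) * chi ((x + y) ⬝ᵥ u) := by
    simp only [add_dotProduct, AddChar.map_add_eq_mul]; ring
  calc ∑ u, walsh f u ^ 2
      = ∑ x, ∑ y, chi (f x) * chi (f y) * ∑ u, chi ((x + y) ⬝ᵥ u) := by
        simp_rw [sq, walsh_eq_sum_chi, sum_mul_sum, this, mul_sum]
        rw [sum_comm]
        exact sum_congr rfl fun x _ => sum_comm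
    _ = (2 ^ n) ^ 2 := by
        simp_rw [sum_chi_add_dotProduct, mul_ite, mul_zero, sum_ite_eq, if_pos (mem_univ _),
          chi_mul_self]
        simp [sq]

lemma sum_chi_eq_card_sub_hammingNorm {α : Type*} [Fintype α] (g : α → ZMod 2) :
    ∑ x, chi (g x) = Fintype.card α - 2 * hammingNorm g := by
  have (a : ZMod 2) : chi a = 1 - 2 * if a ≠ 0 then 1 else 0 := by revert a; decide
  simp only [this, sum_sub_distrib, ← mul_sum, sum_boole, hammingNorm]
  simp

lemma walsh_eq_two_pow_sub_hammingNorm {n : ℕ} (f : (Fin n → ZMod 2) → ZMod 2)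
    (u : Fin n → ZMod 2) : walsh f u = 2 ^ n - 2 * hammingNorm (f + (· ⬝ᵥ u)) := by
  rw [walsh_eq_sum_chi]
  simpa using sum_chi_eq_card_sub_hammingNorm (f + (· ⬝ᵥ u))

lemma card_hammingNorm_eq {α : Type*} [Fintype α] [DecidableEq α] (w : ℕ) :
    #{g : α → ZMod 2 | hammingNorm g = w} = (Fintype.card α).choose w := by
  rw [← Finset.card_univ, ← card_powersetCard]
  refine card_nbij' (fun g => ({x | g x ≠ 0} : Finset α)) (fun s x => if x ∈ s then 1 else 0)
    ?_ ?_ ?_ ?_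
  · intro g hg
    simp_all [hammingNorm]
  · intro s hs
    simp_all [hammingNorm]
  · intro g _
    funext x
    have : ∀ a : ZMod 2, a ≠ 0 → a = 1 := by decide
    by_cases hx : g x = 0 <;> simp [hx, this]
  · intro s _
    ext x
    simp

lemma card_walsh_apply_eq {n : ℕ} (u : Fin n → ZMod 2) (f : (Fin n → ZMod 2) → ZMod 2) :
    #{g | walsh g u = walsh f u} = (2 ^ n).choose (hammingNorm (f + (· ⬝ᵥ u))) := by
  have hiff (g : (Fin n → ZMod 2) → ZMod 2) : walsh g u = walsh f u ↔
      hammingNorm (g + (· ⬝ᵥ u)) = hammingNorm (f + (· ⬝ᵥ u)) := by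
    simp only [walsh_eq_two_pow_sub_hammingNorm]
    omega
  simp_rw [hiff]
  rw [show 2 ^ n = Fintype.card (Fin n → ZMod 2) by simp, ← card_hammingNorm_eq]
  exact card_equiv (Equiv.addRight (· ⬝ᵥ u)) (by simp)

lemma card_spectra (n : ℕ) : #(spectra n) = 2 ^ 2 ^ n := by
  simp [spectra, card_image_of_injective _ (walsh_injective n)]

lemma marginal_walsh_apply {n : ℕ} (u : Fin n → ZMod 2) (f : (Fin n → ZMod 2) → ZMod 2) :
    marginal n u (walsh f u) = ((2 ^ n).choose (hammingNorm (f + (· ⬝ᵥ u))) : ℝ) / 2 ^ 2 ^ n := by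
  rw [marginal, card_spectra, spectra, filter_image,
    card_image_of_injective _ (walsh_injective n), card_walsh_apply_eq]
  push_cast
  rfl

lemma latinDegree_eq_sum_walsh (n : ℕ) :
    latinDegree n = ∑ f, ∏ u, marginal n u (walsh f u) :=
  sum_image fun _ _ _ _ h => walsh_injective n h

lemma latinDegree_le_card_spectra (n : ℕ) : latinDegree n ≤ #(spectra n) := by
  have hmarg (u : Fin n → ZMod 2) (x : ℤ) : 0 ≤ marginal n u x ∧ marginal n u x ≤ 1 :=
    ⟨by unfold marginal; positivity,
      div_le_one_of_le₀ (by exact_mod_cast card_filter_le _ _) (by positivity)⟩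
  calc latinDegree n ≤ ∑ _b ∈ spectra n, (1 : ℝ) :=
        sum_le_sum fun b _ => prod_le_one (fun u _ => (hmarg u _).1) (fun u _ => (hmarg u _).2)
    _ = #(spectra n) := by simp

lemma two_mul_add_le_log_div {t : ℝ} (h0 : 0 ≤ t) (h1 : t < 1) :
    2 * t + 2 / 3 * t ^ 3 ≤ log ((1 + t) / (1 - t)) := by
  have hsum := hasSum_log_sub_log_of_abs_lt_one (abs_lt.2 ⟨by linarith, h1⟩)
  have := sum_le_hasSum (range 2) (fun i _ => by positivity) hsum
  rw [log_div (by linarith) (by linarith)]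
  norm_num [sum_range_succ] at this
  linarith

lemma sum_range_odd (k : ℕ) : ∑ j ∈ range k, (2 * (j : ℝ) + 1) = (k : ℝ) ^ 2 := by
  induction k with
  | zero => simp
  | succ k ih => rw [sum_range_succ, ih]; push_cast; ring

lemma sum_range_odd_cube (k : ℕ) :
    ∑ j ∈ range k, (2 * (j : ℝ) + 1) ^ 3 = (k : ℝ) ^ 2 * (2 * k ^ 2 - 1) := by
  induction k with
  | zero => simp
  | succ k ih => rw [sum_range_succ, ih]; push_cast; ring

lemma sq_div_sub_le {M : ℕ} {x : ℝ} (hM : 1 ≤ M) (hx0 : 0 ≤ x) (hxM : x ≤ M) :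
    x ^ 2 / M - 23 / (36 * M) ≤
      2 * x ^ 2 / (2 * M + 1) + 2 / 3 * (x ^ 2 * (2 * x ^ 2 - 1)) / (2 * M + 1) ^ 3 := by
  have hMR : (1 : ℝ) ≤ M := by exact_mod_cast hM
  have hQ :
      0 ≤ 48 * M * x ^ 4 - (36 * (2 * M + 1) ^ 2 + 24 * M) * x ^ 2 + 23 * (2 * M + 1) ^ 3 := by
    rcases hM.eq_or_lt with rfl | hM2
    · norm_num at hxM ⊢
      nlinarith [sq_nonneg x, pow_le_one₀ (n := 2) hx0 hxM]
    · -- `192 M` times the quartic is `(96 M x² - (36 (2M+1)² + 24 M))² + D`, with `D ≥ 0`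
      -- once `M ≥ 2`.
      have hM2R : (2 : ℝ) ≤ M := by exact_mod_cast hM2
      have hD : 0 ≤ 4416 * (M : ℝ) * (2 * M + 1) ^ 3 - (36 * (2 * M + 1) ^ 2 + 24 * M) ^ 2 := by
        have hM0 : (0 : ℝ) ≤ M := by linarith
        nlinarith [mul_nonneg (mul_nonneg (by linarith : (0 : ℝ) ≤ M - 2) hM0) hM0]
      nlinarith [sq_nonneg (96 * M * x ^ 2 - (36 * (2 * M + 1) ^ 2 + 24 * (M : ℝ)))]
  have hdiff : 2 * x ^ 2 / (2 * M + 1) + 2 / 3 * (x ^ 2 * (2 * x ^ 2 - 1)) / (2 * M + 1) ^ 3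
      - (x ^ 2 / M - 23 / (36 * M)) = (48 * M * x ^ 4 - (36 * (2 * M + 1) ^ 2 + 24 * M) * x ^ 2
        + 23 * (2 * M + 1) ^ 3) / (36 * M * (2 * M + 1) ^ 3) := by
    field_simp
    ring
  rw [← sub_nonneg, hdiff]
  exact div_nonneg hQ (by positivity)

lemma exp_le_prod_ratio {M k : ℕ} (hM : 1 ≤ M) (hk : k ≤ M) :
    exp (k ^ 2 / M - 23 / (36 * M)) ≤ ∏ j ∈ range k, ((M : ℝ) + j + 1) / (M - j) := by
  have hjM {j : ℕ} (hj : j ∈ range k) : (j : ℝ) < M := by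
    exact_mod_cast (mem_range.1 hj).trans_le hk
  set t : ℕ → ℝ := fun j => (2 * j + 1) / (2 * M + 1) with ht
  have hratio {j : ℕ} (hj : j ∈ range k) : ((M : ℝ) + j + 1) / (M - j) = (1 + t j) / (1 - t j) := by
    have h1 : 1 + t j = 2 * ((M : ℝ) + j + 1) / (2 * M + 1) := by rw [ht]; field_simp; ring
    have h2 : 1 - t j = 2 * ((M : ℝ) - j) / (2 * M + 1) := by rw [ht]; field_simp; ring
    rw [h1, h2, div_div_div_cancel_right₀ (by positivity), mul_div_mul_left _ _ two_ne_zero]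
  have hsum : ∑ j ∈ range k, (2 * t j + 2 / 3 * t j ^ 3) =
      2 * (k : ℝ) ^ 2 / (2 * M + 1) + 2 / 3 * (k ^ 2 * (2 * k ^ 2 - 1)) / (2 * M + 1) ^ 3 := by
    have hterm (j : ℕ) : 2 * t j + 2 / 3 * t j ^ 3 =
        (2 * j + 1) * (2 / (2 * M + 1)) + (2 * j + 1) ^ 3 * (2 / 3 / (2 * M + 1) ^ 3) := by
      rw [ht, div_pow]; ring
    rw [sum_congr rfl fun j _ => hterm j, sum_add_distrib, ← sum_mul, ← sum_mul, sum_range_odd,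
      sum_range_odd_cube]
    ring
  calc exp (k ^ 2 / M - 23 / (36 * M))
      ≤ exp (∑ j ∈ range k, (2 * t j + 2 / 3 * t j ^ 3)) := by
        rw [exp_le_exp, hsum]
        exact sq_div_sub_le hM k.cast_nonneg (by exact_mod_cast hk)
    _ ≤ exp (∑ j ∈ range k, log ((1 + t j) / (1 - t j))) := by
        refine exp_le_exp.2 (sum_le_sum fun j hj => two_mul_add_le_log_div (by positivity) ?_)
        rw [ht, div_lt_one (by positivity)]
        linarith [hjM hj]
    _ = ∏ j ∈ range k, ((M : ℝ) + j + 1) / (M - j) := by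
        rw [exp_sum]
        refine prod_congr rfl fun j hj => ?_
        rw [← hratio hj, exp_log (div_pos (by positivity) (by linarith [hjM hj]))]

lemma choose_mul_prod_eq (M k : ℕ) :
    (2 * M).choose (M + k) * ∏ j ∈ range k, (M + j + 1) =
      (2 * M).choose M * ∏ j ∈ range k, (M - j) := by
  induction k with
  | zero => simp
  | succ k ih =>
    have step := Nat.choose_succ_right_eq (2 * M) (M + k)
    rw [show 2 * M - (M + k) = M - k by omega] at step
    rw [prod_range_succ, prod_range_succ, ← add_assoc]
    calc (2 * M).choose (M + k + 1) * ((∏ j ∈ range k, (M + j + 1)) * (M + k + 1))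
        = (2 * M).choose (M + k + 1) * (M + k + 1) * ∏ j ∈ range k, (M + j + 1) := by ring
      _ = (2 * M).choose (M + k) * (∏ j ∈ range k, (M + j + 1)) * (M - k) := by rw [step]; ring
      _ = (2 * M).choose M * ((∏ j ∈ range k, (M - j)) * (M - k)) := by rw [ih]; ring

lemma choose_mul_exp_le_centralBinom {M k : ℕ} (hM : 1 ≤ M) (hk : k ≤ M) :
    ((2 * M).choose (M + k) : ℝ) * exp (k ^ 2 / M - 23 / (36 * M)) ≤ centralBinom M := by
  have hpos : 0 < ∏ j ∈ range k, ((M : ℝ) - j) :=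
    prod_pos fun j hj => sub_pos.2 (by exact_mod_cast (mem_range.1 hj).trans_le hk)
  have hid : ((2 * M).choose (M + k) : ℝ) * ∏ j ∈ range k, ((M : ℝ) + j + 1) =
      centralBinom M * ∏ j ∈ range k, ((M : ℝ) - j) := by
    have hsub : ((∏ j ∈ range k, (M - j) : ℕ) : ℝ) = ∏ j ∈ range k, ((M : ℝ) - j) := by
      rw [Nat.cast_prod]
      exact prod_congr rfl fun j hj => Nat.cast_sub ((mem_range.1 hj).le.trans hk)
    rw [centralBinom_eq_two_mul_choose, ← hsub]
    exact_mod_cast choose_mul_prod_eq M k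
  calc ((2 * M).choose (M + k) : ℝ) * exp (k ^ 2 / M - 23 / (36 * M))
      ≤ ((2 * M).choose (M + k) : ℝ) * ∏ j ∈ range k, ((M : ℝ) + j + 1) / (M - j) :=
        mul_le_mul_of_nonneg_left (exp_le_prod_ratio hM hk) (by positivity)
    _ = centralBinom M := by
        rw [prod_div_distrib, ← mul_div_assoc, hid, mul_div_cancel_right₀ _ hpos.ne']

lemma centralBinom_sq_mul_le (M : ℕ) : (centralBinom M : ℝ) ^ 2 * (π * M) ≤ 16 ^ M := by
  have hfact : (2 * M)! = centralBinom M * M ! * M ! := by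
    rw [centralBinom_eq_two_mul_choose,
      ← Nat.choose_mul_factorial_mul_factorial (by omega : M ≤ 2 * M), show 2 * M - M = M by omega]
  have hW := Real.Wallis.le_W M
  have hW' : Real.Wallis.W M = 16 ^ M / ((centralBinom M : ℝ) ^ 2 * (2 * M + 1)) := by
    rw [Real.Wallis.W_eq_factorial_ratio, hfact, pow_mul]
    push_cast
    field_simp
    norm_num
  have hC : (0 : ℝ) < centralBinom M := by exact_mod_cast centralBinom_pos M
  rw [hW', le_div_iff₀ (by positivity)] at hW
  -- Wallis' lower bound loses only the factor `4M(M+1) / (2M+1)² ≤ 1`.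
  calc (centralBinom M : ℝ) ^ 2 * (π * M)
      ≤ (2 * M + 1) / (2 * M + 2) * (π / 2) * ((centralBinom M : ℝ) ^ 2 * (2 * M + 1)) := by
        rw [div_mul_eq_mul_div, div_mul_eq_mul_div, le_div_iff₀ (by positivity)]
        nlinarith [mul_pos (pow_pos hC 2) pi_pos]
    _ ≤ 16 ^ M := hW

lemma centralBinom_mul_sqrt_le (M : ℕ) : (centralBinom M : ℝ) * √(π * M) ≤ 4 ^ M := by
  rw [← sq_le_sq₀ (by positivity) (by positivity), mul_pow, sq_sqrt (by positivity), ← pow_mul,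
    mul_comm M 2, pow_mul]
  norm_num
  exact centralBinom_sq_mul_le M

lemma choose_div_four_pow_le {M w : ℕ} (hM : 1 ≤ M) (hw : w ≤ 2 * M) :
    ((2 * M).choose w : ℝ) / 4 ^ M ≤ exp (23 / (36 * M) - ((M : ℝ) - w) ^ 2 / M) / √(π * M) := by
  obtain ⟨k, hk, hchoose, hsq⟩ : ∃ k ≤ M,
      (2 * M).choose w = (2 * M).choose (M + k) ∧ ((M : ℝ) - w) ^ 2 = k ^ 2 := by
    rcases le_total M w with h | h
    · exact ⟨w - M, by omega, by rw [Nat.add_sub_cancel' h], by rw [Nat.cast_sub h]; ring⟩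
    · exact ⟨M - w, by omega, choose_symm_of_eq_add (by omega), by rw [Nat.cast_sub h]⟩
  rw [hchoose, hsq, div_le_div_iff₀ (by positivity) (by positivity)]
  have hle : ((2 * M).choose (M + k) : ℝ) ≤ centralBinom M * exp (23 / (36 * M) - k ^ 2 / M) := by
    have := mul_le_mul_of_nonneg_right (choose_mul_exp_le_centralBinom hM hk)
      (exp_pos (23 / (36 * M) - k ^ 2 / M)).le
    rwa [mul_assoc, ← exp_add, show (k : ℝ) ^ 2 / M - 23 / (36 * M) + (23 / (36 * M) - k ^ 2 / M)
      = 0 by ring, exp_zero, mul_one] at this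
  calc ((2 * M).choose (M + k) : ℝ) * √(π * M)
      ≤ centralBinom M * exp (23 / (36 * M) - k ^ 2 / M) * √(π * M) := by gcongr
    _ = exp (23 / (36 * M) - k ^ 2 / M) * (centralBinom M * √(π * M)) := by ring
    _ ≤ exp (23 / (36 * M) - k ^ 2 / M) * 4 ^ M := by gcongr; exact centralBinom_mul_sqrt_le M

lemma prod_choose_div_four_pow_le {ι : Type*} [Fintype ι] {M : ℕ} (hM : 1 ≤ M)
    (hcard : Fintype.card ι = 2 * M) (w : ι → ℕ) (hw : ∀ i, w i ≤ 2 * M)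
    (hsum : ∑ i, ((M : ℝ) - w i) ^ 2 = M ^ 2) :
    ∏ i, ((2 * M).choose (w i) : ℝ) / 4 ^ M ≤ exp (23 / 18) / (π * exp 1 * M) ^ M := by
  calc ∏ i, ((2 * M).choose (w i) : ℝ) / 4 ^ M
      ≤ ∏ i, exp (23 / (36 * M) - ((M : ℝ) - w i) ^ 2 / M) / √(π * M) :=
        prod_le_prod (fun i _ => by positivity) fun i _ => choose_div_four_pow_le hM (hw i)
    _ = exp (∑ i, (23 / (36 * M) - ((M : ℝ) - w i) ^ 2 / M)) / √(π * M) ^ (2 * M) := by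
        rw [prod_div_distrib, prod_const, Finset.card_univ, hcard, exp_sum]
    _ = exp (23 / 18 - M) / (π * M) ^ M := by
        rw [sum_sub_distrib, sum_const, Finset.card_univ, hcard, ← sum_div, hsum, pow_mul,
          sq_sqrt (by positivity)]
        congr 2
        rw [nsmul_eq_mul]
        push_cast
        field_simp
        ring
    _ = exp (23 / 18) / (π * exp 1 * M) ^ M := by
        rw [exp_sub, ← exp_one_pow, div_div, mul_right_comm, mul_pow _ (exp 1),
          mul_comm (exp 1 ^ M)]

lemma sum_sq_sub_hammingNorm {m : ℕ} (f : (Fin (m + 1) → ZMod 2) → ZMod 2) :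
    ∑ u, (((2 ^ m : ℕ) : ℝ) - hammingNorm (f + (· ⬝ᵥ u))) ^ 2 = ((2 ^ m : ℕ) : ℝ) ^ 2 := by
  have h := congrArg (Int.cast : ℤ → ℝ) (sum_walsh_sq f)
  simp only [walsh_eq_two_pow_sub_hammingNorm] at h
  push_cast at h ⊢
  have h4 (u : Fin (m + 1) → ZMod 2) : ((2 : ℝ) ^ (m + 1) - 2 * hammingNorm (f + (· ⬝ᵥ u))) ^ 2 =
      4 * (2 ^ m - hammingNorm (f + (· ⬝ᵥ u))) ^ 2 := by ring
  rw [sum_congr rfl fun u _ => h4 u, ← mul_sum] at h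
  linear_combination h / 4

lemma prod_marginal_walsh_le {m : ℕ} (f : (Fin (m + 1) → ZMod 2) → ZMod 2) :
    ∏ u, marginal (m + 1) u (walsh f u) ≤ exp (23 / 18) / (π * exp 1 * 2 ^ m) ^ 2 ^ m := by
  have hN : 2 ^ (m + 1) = 2 * 2 ^ m := pow_succ' 2 m
  have h := prod_choose_div_four_pow_le Nat.one_le_two_pow (by simp [hN])
    (fun u => hammingNorm (f + (· ⬝ᵥ u)))
    (fun u => hN ▸ hammingNorm_le_card_fintype.trans (by simp))
    (sum_sq_sub_hammingNorm f)
  simp only [marginal_walsh_apply, hN]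
  rw [pow_mul]
  norm_num at h ⊢
  exact h

lemma two_le_exp_mul_sqrt : 2 ≤ exp (23 / 18) * √(8 / (π * exp 1)) := by
  have hexp : 41 / 18 ≤ exp (23 / 18) := by linarith [add_one_le_exp (23 / 18 : ℝ)]
  have hsqrt : 36 / 41 ≤ √(8 / (π * exp 1)) := by
    rw [le_sqrt (by norm_num) (by positivity), le_div_iff₀ (by positivity)]
    nlinarith [pi_lt_d2, exp_one_lt_d9, pi_pos, exp_pos 1]
  calc (2 : ℝ) = 41 / 18 * (36 / 41) := by norm_num
    _ ≤ _ := mul_le_mul hexp hsqrt (by norm_num) (exp_pos _).le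

theorem latin_dependence_spectra (n : ℕ) :
    latinDegree n ≤ Real.exp (23 / 18) *
      (8 / (π * Real.exp 1 * (2 ^ n : ℝ))) ^ (((2 ^ n : ℕ) : ℝ) / 2) := by
  rcases n with _ | m
  · have h := latinDegree_le_card_spectra 0
    rw [card_spectra] at h
    rw [show (((2 ^ 0 : ℕ) : ℝ) / 2) = 1 / 2 by norm_num, ← sqrt_eq_rpow, pow_zero, mul_one]
    exact h.trans (by exact_mod_cast two_le_exp_mul_sqrt)
  · have hexp : (((2 ^ (m + 1) : ℕ) : ℝ) / 2) = (2 ^ m : ℕ) := by push_cast; ring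
    have hcard : ((2 ^ 2 ^ (m + 1) : ℕ) : ℝ) = 4 ^ 2 ^ m := by rw [pow_succ', pow_mul]; norm_num
    have hbase : 8 / (π * exp 1 * 2 ^ (m + 1)) = 4 / (π * exp 1 * 2 ^ m) := by
      rw [pow_succ]; field_simp; ring
    calc latinDegree (m + 1) = ∑ f, ∏ u, marginal (m + 1) u (walsh f u) :=
          latinDegree_eq_sum_walsh _
      _ ≤ ∑ _f : (Fin (m + 1) → ZMod 2) → ZMod 2, exp (23 / 18) / (π * exp 1 * 2 ^ m) ^ 2 ^ m :=
          sum_le_sum fun f _ => prod_marginal_walsh_le f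
      _ = _ := by
          rw [sum_const, Finset.card_univ, hexp, rpow_natCast]
          simp only [Fintype.card_fun, ZMod.card, Fintype.card_fin, nsmul_eq_mul]
          rw [hcard, hbase, div_pow]
          ring
end

section
/- Let s and n be positive integers and let r_{s,n}(N) denote the number of integer tuples (a_1,...,a_s) with |a_i| ≤ n for all i and a_1^2 + ... + a_s^2 = N. Then Σ_{N=0}^{s n^2} r_{s,n}(N)·exp(-N/n) ≥ (π n)^{s/2} · exp(-23s/(36n)). -/
open Real

/-- `numRep s n N` is the number of tuples `(a_1, ..., a_s)` of integers with
`|a_i| ≤ n` and `a_1^2 + ... + a_s^2 = N`. -/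
noncomputable def numRep (s n : ℕ) (N : ℕ) : ℕ :=
  ((Fintype.piFinset (fun _ : Fin s => Finset.Icc (-(n : ℤ)) n)).filter
    (fun a => ∑ i, (a i) ^ 2 = (N : ℤ))).card

open Finset

/-! Expanding the `s`-th power shows that the sum is `θₙ ^ s` for the truncated theta sum
`θₙ = ∑_{|a| ≤ n} exp (-a² / n)`, so it suffices to take `s = 1`. By Poisson summation the full
sum over `ℤ` is `√(π n) ∑_{k ∈ ℤ} exp (-π² n k²) ≥ √(π n)`, while for `|a| > n` we have
`a² / n ≥ |a|`, so the discarded tail is at most a geometric series of size `O(e⁻ⁿ)`; this is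
smaller than `√(π n) (1 - exp (-23 / (36 n)))` for every `n ≥ 1`. -/

lemma sum_numRep_mul_pow {R : Type*} [CommSemiring R] (s n : ℕ) (x : R) :
    ∑ N ∈ range (s * n ^ 2 + 1), (numRep s n N : R) * x ^ N
      = (∑ a ∈ Icc (-(n : ℤ)) n, x ^ (a.natAbs ^ 2)) ^ s := by
  have hmaps : ∀ a ∈ Fintype.piFinset fun _ : Fin s => Icc (-(n : ℤ)) n,
      ∑ i, (a i).natAbs ^ 2 ∈ range (s * n ^ 2 + 1) := by
    intro a ha
    rw [mem_range, Nat.lt_succ_iff]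
    calc ∑ i, (a i).natAbs ^ 2 ≤ ∑ _i : Fin s, n ^ 2 := by
          refine sum_le_sum fun i _ => ?_
          have := mem_Icc.mp (Fintype.mem_piFinset.mp ha i)
          gcongr
          omega
      _ = s * n ^ 2 := by simp
  simp_rw [sum_pow', prod_pow_eq_pow_sum]
  rw [← sum_fiberwise_of_maps_to' hmaps (fun N => x ^ N)]
  refine sum_congr rfl fun N _ => ?_
  rw [sum_const, nsmul_eq_mul, numRep]
  congr 3
  refine filter_congr fun a _ => ?_
  have : ((∑ i, (a i).natAbs ^ 2 : ℕ) : ℤ) = ∑ i, a i ^ 2 := by simp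
  omega

lemma sum_numRep_mul_exp (s n : ℕ) (t : ℝ) :
    ∑ N ∈ range (s * n ^ 2 + 1), (numRep s n N : ℝ) * exp (-(N : ℝ) / t)
      = (∑ a ∈ Icc (-(n : ℤ)) n, exp (-(a : ℝ) ^ 2 / t)) ^ s := by
  have hexp (k : ℕ) : exp (-(k : ℝ) / t) = exp (-1 / t) ^ k := by
    rw [← exp_nat_mul]; ring_nf
  simp_rw [hexp, sum_numRep_mul_pow]
  congr 2 with a
  rw [← hexp]
  push_cast [Nat.cast_natAbs, sq_abs]
  rfl

lemma summable_exp_neg_sq_div_nat {t : ℝ} (ht : 0 < t) :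
    Summable fun k : ℕ => exp (-(k : ℝ) ^ 2 / t) := by
  have := Real.summable_exp_nat_mul_of_ge (c := -t⁻¹) (by simpa using ht)
    (f := fun k : ℕ => (k : ℝ) ^ 2) fun k => by exact_mod_cast Nat.le_self_pow two_ne_zero k
  simpa only [neg_mul, ← div_eq_inv_mul, neg_div] using this

lemma summable_exp_neg_sq_div_int {t : ℝ} (ht : 0 < t) :
    Summable fun a : ℤ => exp (-(a : ℝ) ^ 2 / t) :=
  .of_nat_of_neg (by simpa using summable_exp_neg_sq_div_nat ht)
    (by simpa using summable_exp_neg_sq_div_nat ht)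

lemma sqrt_pi_mul_le_tsum_exp_neg_sq_div {t : ℝ} (ht : 0 < t) :
    √(π * t) ≤ ∑' a : ℤ, exp (-(a : ℝ) ^ 2 / t) := by
  have hπt : 0 < π * t := by positivity
  have hdual : Summable fun a : ℤ => exp (-(a : ℝ) ^ 2 / (π ^ 2 * t)⁻¹) :=
    summable_exp_neg_sq_div_int (by positivity)
  have hone : 1 ≤ ∑' a : ℤ, exp (-(a : ℝ) ^ 2 / (π ^ 2 * t)⁻¹) := by
    simpa using hdual.le_tsum 0 fun _ _ => (exp_pos _).le
  have hpoisson := Real.tsum_exp_neg_mul_int_sq (inv_pos.mpr hπt)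
  calc √(π * t) ≤ √(π * t) * ∑' a : ℤ, exp (-(a : ℝ) ^ 2 / (π ^ 2 * t)⁻¹) :=
        le_mul_of_one_le_right (sqrt_nonneg _) hone
    _ = ∑' a : ℤ, exp (-(a : ℝ) ^ 2 / t) := by
        convert hpoisson.symm using 4 with a a
        · rw [inv_rpow hπt.le, one_div, inv_inv, sqrt_eq_rpow]
        · field_simp
        · field_simp

lemma sum_Icc_neg_succ_succ {M : Type*} [AddCommMonoid M] (f : ℤ → M) (n : ℕ) :
    ∑ a ∈ Icc (-((n + 1 : ℕ) : ℤ)) (n + 1 : ℕ), f a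
      = ∑ a ∈ Icc (-(n : ℤ)) n, f a + (f (-(n + 1)) + f (n + 1)) := by
  have hIcc : Icc (-((n + 1 : ℕ) : ℤ)) (n + 1 : ℕ)
      = insert (-(n + 1 : ℤ)) (insert (n + 1 : ℤ) (Icc (-(n : ℤ)) n)) := by
    ext a; simp only [mem_Icc, mem_insert]; omega
  rw [hIcc, sum_insert (by simp only [mem_insert, mem_Icc]; omega),
    sum_insert (by simp only [mem_Icc]; omega)]
  abel

lemma tsum_int_eq_sum_Icc_add_two_nsmul {G : Type*} [AddCommGroup G] [TopologicalSpace G]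
    [IsTopologicalAddGroup G] [T2Space G] {f : ℤ → G} (heven : f.Even)
    (hf : Summable fun k : ℕ => f k) (n : ℕ) :
    ∑' a, f a = ∑ a ∈ Icc (-(n : ℤ)) n, f a + 2 • ∑' k : ℕ, f (k + (n + 1)) := by
  have htail (m : ℕ) : Summable fun k : ℕ => f (k + (m + 1)) := by
    simpa using (summable_nat_add_iff (m + 1)).mpr hf
  induction n with
  | zero =>
    have hneg : (fun k : ℕ => f (-(k + 1))) = fun k : ℕ => f (k + 1) := by
      ext k; exact heven _
    rw [tsum_of_nat_of_neg_add_one hf (hneg ▸ by simpa using htail 0), hneg, hf.tsum_eq_zero_add]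
    simp [two_nsmul, add_assoc]
  | succ n ih =>
    have hstep : ∑' k : ℕ, f (k + (n + 1))
        = f (n + 1) + ∑' k : ℕ, f (k + ((n + 1 : ℕ) + 1)) := by
      rw [(htail n).tsum_eq_zero_add]
      push_cast
      ring_nf
    rw [ih, hstep, sum_Icc_neg_succ_succ, heven, two_nsmul, two_nsmul]
    abel

lemma tsum_exp_neg_add_sq_div_le {t m : ℝ} (ht : 0 < t) (htm : t ≤ m) :
    ∑' k : ℕ, exp (-((k : ℝ) + m) ^ 2 / t) ≤ exp (-m) / (1 - exp (-1)) := by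
  have hexp : exp (-1) < 1 := exp_lt_one_iff.mpr (by norm_num)
  have hgeom : HasSum (fun k : ℕ => exp (-m) * exp (-1) ^ k) (exp (-m) / (1 - exp (-1))) := by
    simpa only [div_eq_mul_inv] using (hasSum_geometric_of_lt_one (exp_pos _).le hexp).mul_left _
  have hbound (k : ℕ) : exp (-((k : ℝ) + m) ^ 2 / t) ≤ exp (-m) * exp (-1) ^ k := by
    rw [← exp_nat_mul, ← exp_add, exp_le_exp, div_le_iff₀ ht]
    have hk : (0 : ℝ) ≤ k := k.cast_nonneg
    nlinarith
  refine (Summable.tsum_le_tsum hbound ?_ hgeom.summable).trans_eq hgeom.tsum_eq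
  exact hgeom.summable.of_nonneg_of_le (fun k => (exp_pos _).le) hbound

lemma sqrt_pi_mul_mul_exp_le {x : ℝ} (hx : 1 ≤ x) :
    √(π * x) * exp (-23 / (36 * x)) ≤ √(π * x) - 2 * (exp (-(x + 1)) / (1 - exp (-1))) := by
  -- With `v = 23 / (36 x)`: `1 - exp (-v) ≥ v / (1 + v) ≥ 23 / (59 x)`, and the tail term
  -- `2 / (eˣ (e - 1))` is below `√(π x) · 23 / (59 x)` because `eˣ ≥ e x`.
  set P := √(π * x)
  have hx0 : 0 < x := by linarith
  have hP : 1.7 ≤ P := by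
    rw [show (1.7 : ℝ) = √(1.7 ^ 2) by rw [sqrt_sq (by norm_num)]]
    exact sqrt_le_sqrt (by nlinarith [pi_gt_three])
  have he : 2.7 ≤ exp 1 := by linarith [exp_one_gt_d9]
  have hexp_x : 2.7 * x ≤ exp x := by
    have := add_one_le_exp (x - 1)
    rw [show x = 1 + (x - 1) by ring, exp_add]
    nlinarith [exp_pos 1]
  have htail : 2 * (exp (-(x + 1)) / (1 - exp (-1))) ≤ P * (23 / (59 * x)) := by
    have hkey : 118 * x ≤ 23 * P * (exp x * (exp 1 - 1)) :=
      calc 118 * x ≤ 23 * 1.7 * ((2.7 * x) * 1.7) := by nlinarith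
        _ ≤ 23 * P * (exp x * (exp 1 - 1)) := by gcongr; linarith
    rw [exp_neg, exp_neg, exp_add]
    field_simp
    nlinarith [exp_pos x, exp_pos 1]
  have hexp_v : exp (-23 / (36 * x)) ≤ 1 - 23 / (59 * x) :=
    calc exp (-23 / (36 * x)) ≤ 1 / (1 + 23 / (36 * x)) := by
          rw [neg_div, exp_neg, one_div]
          exact inv_anti₀ (by positivity) (by linarith [add_one_le_exp (23 / (36 * x))])
      _ ≤ 1 - 23 / (59 * x) := by
          rw [div_le_iff₀ (by positivity)]
          field_simp
          nlinarith
  nlinarith [sqrt_nonneg (π * x)]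

lemma sqrt_pi_mul_mul_exp_le_sum_Icc {n : ℕ} (hn : 0 < n) :
    √(π * n) * exp (-23 / (36 * n)) ≤ ∑ a ∈ Icc (-(n : ℤ)) n, exp (-(a : ℝ) ^ 2 / n) := by
  have hn' : (0 : ℝ) < n := by exact_mod_cast hn
  have hsplit := tsum_int_eq_sum_Icc_add_two_nsmul (f := fun a : ℤ => exp (-(a : ℝ) ^ 2 / n))
    (fun a => by simp) (by simpa using summable_exp_neg_sq_div_nat hn') n
  have htail : ∑' k : ℕ, exp (-(((k + (n + 1) : ℤ)) : ℝ) ^ 2 / n)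
      ≤ exp (-(n + 1)) / (1 - exp (-1)) := by
    simpa [add_assoc] using tsum_exp_neg_add_sq_div_le hn' (m := n + 1) (by linarith)
  rw [two_nsmul] at hsplit
  linarith [sqrt_pi_mul_le_tsum_exp_neg_sq_div hn',
    sqrt_pi_mul_mul_exp_le (x := n) (by exact_mod_cast hn)]

theorem sum_squares_integral_bound_general (s n : ℕ) (hn : 0 < n) :
    ∑ N ∈ Finset.range (s * n ^ 2 + 1), (numRep s n N : ℝ) * Real.exp (-(N : ℝ) / n) ≥
      (π * n) ^ ((s : ℝ) / 2) * Real.exp (-(23 * s) / (36 * n)) := by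
  rw [ge_iff_le, sum_numRep_mul_exp]
  calc (π * n) ^ ((s : ℝ) / 2) * exp (-(23 * s) / (36 * n))
      = (√(π * n) * exp (-23 / (36 * n))) ^ s := by
        rw [mul_pow, sqrt_eq_rpow, ← rpow_natCast, ← rpow_mul (by positivity), ← exp_nat_mul]
        ring_nf
    _ ≤ _ := pow_le_pow_left₀ (by positivity) (sqrt_pi_mul_mul_exp_le_sum_Icc hn) s

theorem sum_squares_integral_bound (s n : ℕ) (hs : 0 < s) (hn : 0 < n) :
    ∑ N ∈ Finset.range (s * n ^ 2 + 1), (numRep s n N : ℝ) * Real.exp (-(N : ℝ) / n) ≥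
      (π * n) ^ ((s : ℝ) / 2) * Real.exp (-(23 * s) / (36 * n)) :=
  sum_squares_integral_bound_general s n hn
end
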